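/- arXiv:cs/0602091 — 3 statements merged into one kernel-verified Lean document; each statement's English description precedes it below -/
import Mathlib

section
/- Let K_Z be an n×n symmetric positive definite real matrix and P > 0. Let K_X be an n×n symmetric positive semidefinite matrix with tr K_X ≤ nP, and set K_Y = K_X + K_Z. Then K_X attains the maximum of log det(K' + K_Z) over all symmetric positive semidefinite K' with tr K' ≤ nP if and only if both of the following hold: (i) Power: tr K_X = nP; and (ii) Water-filling: tr(K_X (K_Y - λ_min(K_Y) I)) = 0, where λ_min(K_Y) is the smallest eigenvalue of K_Y. -/
/-!
`log det` is concave, so `K_X` is optimal on the convex feasible set iff every directional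
derivative `tr (K_Y⁻¹ (K' - K_X))` towards a feasible `K'` is nonpositive. With
`λ = λ_min(K_Y)`, the linear functional `K' ↦ tr (K_Y⁻¹ K')` is at most `λ⁻¹ tr K' ≤ λ⁻¹ nP` on
the feasible set, with equality at `nP` times the projection onto a bottom eigenvector. Optimality
therefore means `tr (K_Y⁻¹ K_X) = λ⁻¹ nP`, that is `tr K_X = nP` and
`tr (K_X (λ⁻¹ I - K_Y⁻¹)) = 0`. A product of positive semidefinite matrices with zero trace
vanishes, and `K_X (λ⁻¹ I - K_Y⁻¹) = 0` is equivalent to `K_X (K_Y - λ I) = 0`.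
-/

open MeasureTheory Real Filter Matrix

noncomputable section

/-- The smallest eigenvalue of a (symmetric) real matrix. -/
def lambdaMin {n : ℕ} (M : Matrix (Fin n) (Fin n) ℝ) : ℝ :=
  sInf {t : ℝ | ∃ v : Fin n → ℝ, v ≠ 0 ∧ M.mulVec v = t • v}

open scoped MatrixOrder ComplexOrder Topology

namespace Matrix

variable {ι : Type*} [Fintype ι]

section TraceOfProduct

variable {𝕜 : Type*} [RCLike 𝕜] {A B : Matrix ι ι 𝕜}

theorem PosSemidef.exists_trace_mul_eq_trace_conjTranspose_mul_self (hA : A.PosSemidef)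
    (hB : B.PosSemidef) :
    ∃ X : Matrix ι ι 𝕜, (A * B).trace = (Xᴴ * X).trace ∧ (X = 0 → A * B = 0) := by
  classical
  obtain ⟨R, rfl⟩ := CStarAlgebra.nonneg_iff_eq_star_mul_self.mp hA.nonneg
  obtain ⟨S, rfl⟩ := CStarAlgebra.nonneg_iff_eq_star_mul_self.mp hB.nonneg
  have hAB : star R * R * (star S * S) = star R * (S * Rᴴ)ᴴ * S := by
    simp only [star_eq_conjTranspose, conjTranspose_mul, conjTranspose_conjTranspose,
      Matrix.mul_assoc]
  refine ⟨S * Rᴴ, ?_, fun h => by rw [hAB, h, conjTranspose_zero, Matrix.mul_zero, Matrix.zero_mul]⟩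
  rw [hAB, Matrix.mul_assoc, trace_mul_comm, Matrix.mul_assoc, star_eq_conjTranspose]

theorem PosSemidef.trace_mul_nonneg (hA : A.PosSemidef) (hB : B.PosSemidef) :
    0 ≤ (A * B).trace := by
  obtain ⟨X, hX, -⟩ := hA.exists_trace_mul_eq_trace_conjTranspose_mul_self hB
  exact hX ▸ (posSemidef_conjTranspose_mul_self X).trace_nonneg

theorem PosSemidef.trace_mul_eq_zero_iff (hA : A.PosSemidef) (hB : B.PosSemidef) :
    (A * B).trace = 0 ↔ A * B = 0 := by
  refine ⟨fun h => ?_, fun h => by rw [h, trace_zero]⟩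
  obtain ⟨X, hX, hX0⟩ := hA.exists_trace_mul_eq_trace_conjTranspose_mul_self hB
  exact hX0 (trace_conjTranspose_mul_self_eq_zero_iff.mp (hX ▸ h))

end TraceOfProduct

theorem convex_setOf_posSemidef_trace_le (c : ℝ) :
    Convex ℝ {K : Matrix ι ι ℝ | K.PosSemidef ∧ K.trace ≤ c} := by
  intro X hX Y hY a b ha hb hab
  refine ⟨(hX.1.smul ha).add (hY.1.smul hb), ?_⟩
  calc (a • X + b • Y).trace = a * X.trace + b * Y.trace := by
        rw [trace_add, trace_smul, trace_smul, smul_eq_mul, smul_eq_mul]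
    _ ≤ a * c + b * c := by gcongr; exacts [hX.2, hY.2]
    _ = c := by rw [← add_mul, hab, one_mul]

variable [DecidableEq ι]

theorem setOf_exists_mulVec_eq_smul_eq_spectrum {K : Type*} [Field K] (M : Matrix ι ι K) :
    {t : K | ∃ v : ι → K, v ≠ 0 ∧ M *ᵥ v = t • v} = spectrum K M := by
  ext t
  rw [Set.mem_ofPred_eq, spectrum.mem_iff, isUnit_iff_isUnit_det, isUnit_iff_ne_zero, not_not,
    ← exists_mulVec_eq_zero_iff]
  simp only [Algebra.algebraMap_eq_smul_one, sub_mulVec, smul_mulVec, one_mulVec, sub_eq_zero,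
    eq_comm (a := t • _)]

theorem trace_inv_mul_vecMulVec_of_mulVec_eq_smul {M : Matrix ι ι ℝ} (hM : IsUnit M.det)
    {μ : ℝ} (hμ : μ ≠ 0) {u : ι → ℝ} (hu : M *ᵥ u = μ • u) :
    (M⁻¹ * vecMulVec u u).trace = μ⁻¹ * (u ⬝ᵥ u) := by
  have hinv : M⁻¹ *ᵥ u = μ⁻¹ • u := by
    have h := congrArg (M⁻¹ *ᵥ ·) hu
    simp only [mulVec_mulVec, nonsing_inv_mul _ hM, one_mulVec, mulVec_smul] at h
    rw [eq_inv_smul_iff₀ hμ]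
    exact h.symm
  rw [mul_vecMulVec, hinv, smul_vecMulVec, trace_smul, trace_vecMulVec, smul_eq_mul]

theorem PosDef.log_det_le_trace_sub_card {C : Matrix ι ι ℝ} (hC : C.PosDef) :
    log C.det ≤ C.trace - Fintype.card ι := by
  have hdet : C.det = ∏ i, hC.isHermitian.eigenvalues i := by
    simpa using hC.isHermitian.det_eq_prod_eigenvalues
  have htr : C.trace = ∑ i, hC.isHermitian.eigenvalues i := by
    simpa using hC.isHermitian.trace_eq_sum_eigenvalues
  rw [hdet, htr, log_prod fun i _ => (hC.eigenvalues_pos i).ne', Finset.card_univ.symm,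
    ← nsmul_one, ← Finset.sum_const, ← Finset.sum_sub_distrib]
  exact Finset.sum_le_sum fun i _ => log_le_sub_one_of_pos (hC.eigenvalues_pos i)

theorem PosDef.log_det_le_log_det_add_trace_inv_mul_sub {A B : Matrix ι ι ℝ} (hA : A.PosDef)
    (hB : B.PosDef) : log A.det ≤ log B.det + (B⁻¹ * (A - B)).trace := by
  obtain ⟨R, hR⟩ := CStarAlgebra.nonneg_iff_eq_star_mul_self.mp hB.inv.posSemidef.nonneg
  rw [star_eq_conjTranspose] at hR
  have hdetC : (R * A * Rᴴ).det = A.det / B.det := by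
    rw [det_mul, det_mul, mul_comm, ← mul_assoc, ← det_mul, ← hR, det_nonsing_inv,
      Ring.inverse_eq_inv', inv_mul_eq_div]
  have hC : (R * A * Rᴴ).PosDef := by
    refine (hA.posSemidef.mul_mul_conjTranspose_same R).posDef_iff_det_ne_zero.mpr ?_
    rw [hdetC]
    exact (div_pos hA.det_pos hB.det_pos).ne'
  have htrC : (R * A * Rᴴ).trace = (B⁻¹ * A).trace := by
    rw [trace_mul_cycle, hR, Matrix.mul_assoc]
  have key := hC.log_det_le_trace_sub_card
  rw [hdetC, log_div hA.det_pos.ne' hB.det_pos.ne', htrC] at key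
  rw [Matrix.mul_sub, trace_sub, nonsing_inv_mul _ hB.det_pos.ne'.isUnit, trace_one]
  linarith

theorem trace_inv_mul_nonpos_of_det_add_smul_le {B D : Matrix ι ι ℝ} (hB : 0 < B.det)
    (h : ∀ ε ∈ Set.Ioo (0 : ℝ) 1, (B + ε • D).det ≤ B.det) : (B⁻¹ * D).trace ≤ 0 := by
  by_contra! hpos
  set M := B⁻¹ * D
  -- `det (1 + ε • M) = 1 + ε * (tr M + q(ε) * ε)`, and the bracket is positive for small `ε`.
  set q := (det (1 + (Polynomial.X : Polynomial ℝ) • M.map Polynomial.C)).divX.divX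
  have hcont : Continuous fun ε : ℝ => M.trace + q.eval ε * ε := by fun_prop
  have hnear : ∀ᶠ ε in 𝓝[>] (0 : ℝ), 0 < M.trace + q.eval ε * ε :=
    nhdsWithin_le_nhds <| continuousAt_const.eventually_lt hcont.continuousAt (by simpa using hpos)
  have hsmall : ∀ᶠ ε in 𝓝[>] (0 : ℝ), ε ∈ Set.Ioo 0 1 := Ioo_mem_nhdsGT one_pos
  obtain ⟨ε, ⟨hε0, hε1⟩, hεpos⟩ := (hsmall.and hnear).exists
  have hfactor : B + ε • D = B * (1 + ε • M) := by
    rw [Matrix.mul_add, Matrix.mul_one, Matrix.mul_smul, ← Matrix.mul_assoc,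
      mul_nonsing_inv _ (isUnit_iff_ne_zero.mpr hB.ne'), Matrix.one_mul]
  have hlt : B.det < (B + ε • D).det := by
    rw [hfactor, det_mul, det_one_add_smul]
    nlinarith [mul_pos hB (mul_pos hε0 hεpos)]
  exact (h ε ⟨hε0, hε1⟩).not_gt hlt

theorem forall_log_det_add_le_iff {S : Set (Matrix ι ι ℝ)} {X Z : Matrix ι ι ℝ}
    (hS : StarConvex ℝ X S) (hSpsd : ∀ K ∈ S, K.PosSemidef) (hX : X ∈ S) (hZ : Z.PosDef) :
    (∀ K ∈ S, log (K + Z).det ≤ log (X + Z).det) ↔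
      ∀ K ∈ S, ((X + Z)⁻¹ * (K - X)).trace ≤ 0 := by
  have hXZ : (X + Z).PosDef := hZ.posSemidef_add (hSpsd X hX)
  refine ⟨fun hmax K hK => trace_inv_mul_nonpos_of_det_add_smul_le hXZ.det_pos fun ε hε => ?_,
    fun h K hK => ?_⟩
  · have hmem : (1 - ε) • X + ε • K ∈ S := hS hK (by linarith [hε.2]) hε.1.le (by ring)
    have hsum : X + Z + ε • (K - X) = (1 - ε) • X + ε • K + Z := by
      rw [smul_sub, sub_smul, one_smul]; abel
    rw [hsum, ← log_le_log_iff (hZ.posSemidef_add (hSpsd _ hmem)).det_pos hXZ.det_pos]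
    exact hmax _ hmem
  · have hKZ : (K + Z).PosDef := hZ.posSemidef_add (hSpsd K hK)
    have key := hKZ.log_det_le_log_det_add_trace_inv_mul_sub hXZ
    rw [add_sub_add_right_eq_sub] at key
    linarith [h K hK]

end Matrix

section LambdaMin

variable {n : ℕ} {M : Matrix (Fin n) (Fin n) ℝ}

theorem lambdaMin_eq_sInf_spectrum (M : Matrix (Fin n) (Fin n) ℝ) :
    lambdaMin M = sInf (spectrum ℝ M) := by
  rw [lambdaMin, ← setOf_exists_mulVec_eq_smul_eq_spectrum]

theorem lambdaMin_le_of_mem_spectrum {x : ℝ} (hx : x ∈ spectrum ℝ M) : lambdaMin M ≤ x := by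
  rw [lambdaMin_eq_sInf_spectrum]
  exact csInf_le M.finite_spectrum.bddBelow hx

theorem Matrix.IsHermitian.lambdaMin_mem_spectrum [NeZero n] (hM : M.IsHermitian) :
    lambdaMin M ∈ spectrum ℝ M := by
  rw [lambdaMin_eq_sInf_spectrum]
  refine Set.Nonempty.csInf_mem ?_ M.finite_spectrum
  rw [hM.spectrum_real_eq_range_eigenvalues]
  exact Set.range_nonempty _

theorem Matrix.IsHermitian.exists_mulVec_eq_lambdaMin_smul [NeZero n] (hM : M.IsHermitian) :
    ∃ u, u ≠ 0 ∧ M *ᵥ u = lambdaMin M • u := by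
  have h := hM.lambdaMin_mem_spectrum
  rwa [← setOf_exists_mulVec_eq_smul_eq_spectrum] at h

theorem Matrix.PosDef.lambdaMin_pos [NeZero n] (hM : M.PosDef) : 0 < lambdaMin M := by
  obtain ⟨i, hi⟩ :=
    hM.isHermitian.spectrum_real_eq_range_eigenvalues ▸ hM.isHermitian.lambdaMin_mem_spectrum
  exact hi ▸ hM.eigenvalues_pos i

theorem Matrix.IsHermitian.posSemidef_sub_lambdaMin_smul_one (hM : M.IsHermitian) :
    (M - lambdaMin M • 1).PosSemidef := by
  rw [← Matrix.le_iff, ← Algebra.algebraMap_eq_smul_one,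
    algebraMap_le_iff_le_spectrum hM.isSelfAdjoint]
  exact fun x hx => lambdaMin_le_of_mem_spectrum hx

theorem Matrix.PosDef.posSemidef_inv_lambdaMin_smul_one_sub_inv [NeZero n] (hM : M.PosDef) :
    ((lambdaMin M)⁻¹ • 1 - M⁻¹).PosSemidef := by
  have hu : IsUnit M := (isUnit_iff_isUnit_det M).mpr hM.det_pos.ne'.isUnit
  rw [← Matrix.le_iff, ← Algebra.algebraMap_eq_smul_one, nonsing_inv_eq_ringInverse,
    ← cfc_ringInverse_id (R := ℝ) M hu hM.isHermitian.isSelfAdjoint,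
    cfc_le_algebraMap_iff _ _ _ (M.finite_spectrum.continuousOn _) hM.isHermitian.isSelfAdjoint]
  exact fun x hx => inv_anti₀ hM.lambdaMin_pos (lambdaMin_le_of_mem_spectrum hx)

section PositiveDefinite

variable [NeZero n] {K : Matrix (Fin n) (Fin n) ℝ}

theorem Matrix.PosDef.trace_inv_mul_le (hM : M.PosDef) (hK : K.PosSemidef) :
    (M⁻¹ * K).trace ≤ (lambdaMin M)⁻¹ * K.trace := by
  have h := hK.trace_mul_nonneg hM.posSemidef_inv_lambdaMin_smul_one_sub_inv
  rw [Matrix.mul_sub, trace_sub, Matrix.mul_smul, Matrix.mul_one, trace_smul, smul_eq_mul,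
    trace_mul_comm K] at h
  linarith

theorem Matrix.PosDef.trace_mul_sub_lambdaMin_smul_one_eq_zero_iff (hM : M.PosDef)
    (hK : K.PosSemidef) :
    (K * (M - lambdaMin M • 1)).trace = 0 ↔ (M⁻¹ * K).trace = (lambdaMin M)⁻¹ * K.trace := by
  set N := (lambdaMin M)⁻¹ • (1 : Matrix (Fin n) (Fin n) ℝ) - M⁻¹
  have hlam := hM.lambdaMin_pos.ne'
  have hMinv : M⁻¹ * M = 1 := nonsing_inv_mul _ hM.det_pos.ne'.isUnit
  have hfactor : K * (M - lambdaMin M • 1) = lambdaMin M • (K * N * M) := by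
    simp only [N, Matrix.mul_sub, Matrix.sub_mul, Matrix.mul_smul, Matrix.smul_mul,
      Matrix.mul_assoc, hMinv, Matrix.mul_one, smul_sub, smul_smul, mul_inv_cancel₀ hlam, one_smul]
  have hKN : (K * N).trace = (lambdaMin M)⁻¹ * K.trace - (M⁻¹ * K).trace := by
    rw [Matrix.mul_sub, trace_sub, Matrix.mul_smul, Matrix.mul_one, trace_smul, smul_eq_mul,
      trace_mul_comm K]
  have hcancel : K * N * M = 0 ↔ K * N = 0 := by
    refine ⟨fun h => ?_, fun h => by rw [h, Matrix.zero_mul]⟩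
    rw [← Matrix.mul_one (K * N), ← mul_nonsing_inv M hM.det_pos.ne'.isUnit, ← Matrix.mul_assoc,
      h, Matrix.zero_mul]
  rw [hK.trace_mul_eq_zero_iff hM.isHermitian.posSemidef_sub_lambdaMin_smul_one, hfactor,
    smul_eq_zero_iff_right hlam, hcancel,
    ← hK.trace_mul_eq_zero_iff hM.posSemidef_inv_lambdaMin_smul_one_sub_inv, hKN, sub_eq_zero,
    eq_comm]

theorem Matrix.PosDef.exists_posSemidef_trace_eq_and_trace_inv_mul_eq (hM : M.PosDef) {c : ℝ}
    (hc : 0 ≤ c) :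
    ∃ K : Matrix (Fin n) (Fin n) ℝ, K.PosSemidef ∧ K.trace = c ∧
      (M⁻¹ * K).trace = (lambdaMin M)⁻¹ * c := by
  obtain ⟨u, hu0, hu⟩ := hM.isHermitian.exists_mulVec_eq_lambdaMin_smul
  have huu : 0 < u ⬝ᵥ u := by simpa using dotProduct_star_self_pos_iff.mpr hu0
  refine ⟨(c / (u ⬝ᵥ u)) • vecMulVec u u,
    (posSemidef_vecMulVec_self_star u).smul (div_nonneg hc huu.le), ?_, ?_⟩
  · rw [trace_smul, trace_vecMulVec, smul_eq_mul, div_mul_cancel₀ _ huu.ne']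
  · rw [Matrix.mul_smul, trace_smul, trace_inv_mul_vecMulVec_of_mulVec_eq_smul
      hM.det_pos.ne'.isUnit hM.lambdaMin_pos.ne' hu, smul_eq_mul]
    field_simp

end PositiveDefinite

end LambdaMin

theorem stmt11_general (n : ℕ) (K_Z K_X : Matrix (Fin n) (Fin n) ℝ) (P : ℝ)
    (hKZ : K_Z.PosDef) (hKX : K_X.PosSemidef) (htr : K_X.trace ≤ (n : ℝ) * P) :
    (∀ K' : Matrix (Fin n) (Fin n) ℝ, K'.PosSemidef → K'.trace ≤ (n : ℝ) * P →
        Real.log (K' + K_Z).det ≤ Real.log (K_X + K_Z).det) ↔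
      (K_X.trace = (n : ℝ) * P ∧
        (K_X * ((K_X + K_Z) -
          lambdaMin (K_X + K_Z) • (1 : Matrix (Fin n) (Fin n) ℝ))).trace = 0) := by
  rcases n.eq_zero_or_pos with rfl | hn
  · simp [Matrix.trace]
  have : NeZero n := ⟨hn.ne'⟩
  have hB : (K_X + K_Z).PosDef := hKZ.posSemidef_add hKX
  have hopt := forall_log_det_add_le_iff ((convex_setOf_posSemidef_trace_le _) ⟨hKX, htr⟩)
    (fun K hK => hK.1) ⟨hKX, htr⟩ hKZ
  simp only [Set.mem_ofPred_eq, and_imp] at hopt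
  rw [hopt, hB.trace_mul_sub_lambdaMin_smul_one_eq_zero_iff hKX]
  simp only [Matrix.mul_sub, trace_sub, sub_nonpos]
  have hlam : 0 < (lambdaMin (K_X + K_Z))⁻¹ := inv_pos.mpr hB.lambdaMin_pos
  have hbound := hB.trace_inv_mul_le hKX
  constructor
  · intro h
    obtain ⟨K, hK, hKtr, hKval⟩ :=
      hB.exists_posSemidef_trace_eq_and_trace_inv_mul_eq (hKX.trace_nonneg.trans htr)
    have hle := hKval ▸ h K hK hKtr.le
    have htrX : K_X.trace = n * P := le_antisymm htr (le_of_mul_le_mul_left (by linarith) hlam)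
    exact ⟨htrX, le_antisymm hbound (htrX ▸ hle)⟩
  · rintro ⟨htrX, hX⟩ K hK hKtr
    calc ((K_X + K_Z)⁻¹ * K).trace ≤ (lambdaMin (K_X + K_Z))⁻¹ * K.trace := hB.trace_inv_mul_le hK
      _ ≤ (lambdaMin (K_X + K_Z))⁻¹ * (n * P) := by gcongr
      _ = ((K_X + K_Z)⁻¹ * K_X).trace := by rw [hX, htrX]

/-- Water-filling characterization of the optimal input covariance
for the `n`-block nonfeedback Gaussian capacity: `K_X` maximizes
`log det(K' + K_Z)` over psd `K'` with `tr K' ≤ nP` iff `tr K_X = nP` and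
`tr(K_X (K_Y - λ_min(K_Y) I)) = 0` where `K_Y = K_X + K_Z`. -/
theorem stmt11 (n : ℕ) (K_Z K_X : Matrix (Fin n) (Fin n) ℝ) (P : ℝ) (hP : 0 < P)
    (hKZ : K_Z.PosDef) (hKX : K_X.PosSemidef) (htr : K_X.trace ≤ (n : ℝ) * P) :
    (∀ K' : Matrix (Fin n) (Fin n) ℝ, K'.PosSemidef → K'.trace ≤ (n : ℝ) * P →
        Real.log (K' + K_Z).det ≤ Real.log (K_X + K_Z).det) ↔
      (K_X.trace = (n : ℝ) * P ∧
        (K_X * ((K_X + K_Z) -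
          lambdaMin (K_X + K_Z) • (1 : Matrix (Fin n) (Fin n) ℝ))).trace = 0) :=
  stmt11_general n K_Z K_X P hKZ hKX htr
end
end

section
/- Let K_Z be an arbitrary n×n symmetric positive definite real matrix. Then the function P ↦ C_FB,n(K_Z,P) is concave on (0,∞): for all P₁, P₂ > 0 and λ ∈ [0,1], C_FB,n(K_Z, λP₁ + (1-λ)P₂) ≥ λ C_FB,n(K_Z,P₁) + (1-λ) C_FB,n(K_Z,P₂). -/
open MeasureTheory Real Filter Matrix

noncomputable section

/-- The `n`-block feedback capacity `C_FB,n(K_Z, P)` of Cover–Pombra. -/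
def CFBn {n : ℕ} (K_Z : Matrix (Fin n) (Fin n) ℝ) (P : ℝ) : ℝ :=
  sSup {c : ℝ | ∃ K_V B : Matrix (Fin n) (Fin n) ℝ,
    K_V.PosSemidef ∧ (∀ i j : Fin n, i ≤ j → B i j = 0) ∧
    (K_V + B * K_Z * Bᵀ).trace ≤ (n : ℝ) * P ∧
    c = (1 / (2 * (n : ℝ))) *
          Real.log ((K_V + (1 + B) * K_Z * (1 + B)ᵀ).det / K_Z.det)}

/-!
Mixing two feedback schemes `(K_V₁, B₁)`, `(K_V₂, B₂)` with weights `s + t = 1` into the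
feedback `s B₁ + t B₂` and the noise `s K_V₁ + t K_V₂ + s t (B₁ - B₂) K_Z (B₁ - B₂)ᵀ` gives a
scheme whose power `tr (K_V + B K_Z Bᵀ)` and output covariance `K_V + (I + B) K_Z (I + B)ᵀ` are
exactly the mixtures of those of the two schemes: the extra noise cancels the cross terms of the
mixed feedback. Since `log det` is concave on positive definite matrices, the rate of the mixed
scheme is at least the mixture of the two rates; passing to suprema gives concavity in `P`.
-/

open scoped MatrixOrder Pointwise

lemma Real.mul_sSup_add_mul_sSup_le {S T U : Set ℝ} {a b : ℝ} (ha : 0 ≤ a) (hb : 0 ≤ b)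
    (hS : S.Nonempty) (hS' : BddAbove S) (hT : T.Nonempty) (hT' : BddAbove T)
    (hU : BddAbove U) (h : ∀ x ∈ S, ∀ y ∈ T, ∃ z ∈ U, a * x + b * y ≤ z) :
    a * sSup S + b * sSup T ≤ sSup U := by
  rw [← smul_eq_mul, ← smul_eq_mul, ← Real.sSup_smul_of_nonneg ha, ← Real.sSup_smul_of_nonneg hb,
    ← csSup_add (hS.smul_set) (hS'.smul_of_nonneg ha) (hT.smul_set) (hT'.smul_of_nonneg hb)]
  refine csSup_le (hS.smul_set.add hT.smul_set) ?_
  rintro _ ⟨_, ⟨x, hx, rfl⟩, _, ⟨y, hy, rfl⟩, rfl⟩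
  obtain ⟨z, hz, hle⟩ := h x hx y hy
  exact hle.trans (le_csSup hU hz)

namespace Matrix

lemma det_one_add_eq_one {ι R : Type*} [Fintype ι] [LinearOrder ι] [CommRing R]
    {B : Matrix ι ι R} (hB : ∀ i j, i ≤ j → B i j = 0) : (1 + B).det = 1 := by
  rw [det_of_isLowerTriangular _ fun i j hij => ?_]
  · simp [hB _ _ le_rfl]
  · have hij : i < j := OrderDual.toDual_lt_toDual.mp hij
    simp [one_apply_ne hij.ne, hB _ _ hij.le]

lemma convex_posDef {ι : Type*} : Convex ℝ {A : Matrix ι ι ℝ | A.PosDef} := by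
  intro A hA C hC a b ha hb hab
  rcases ha.eq_or_lt with rfl | ha
  · rw [zero_add] at hab
    simpa [hab] using hC
  · exact (PosDef.smul hA ha).add_posSemidef (hC.posSemidef.smul hb)

lemma mix_add_mul_mul_transpose {ι R : Type*} [Fintype ι] [CommRing R]
    (K V₁ V₂ B₁ B₂ C : Matrix ι ι R) (s : R) :
    s • V₁ + (1 - s) • V₂ + (s * (1 - s)) • ((B₁ - B₂) * K * (B₁ - B₂)ᵀ) +
        (C + (s • B₁ + (1 - s) • B₂)) * K * (C + (s • B₁ + (1 - s) • B₂))ᵀ =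
      s • (V₁ + (C + B₁) * K * (C + B₁)ᵀ) + (1 - s) • (V₂ + (C + B₂) * K * (C + B₂)ᵀ) := by
  simp only [transpose_add, transpose_smul, transpose_sub, Matrix.add_mul, Matrix.sub_mul,
    Matrix.mul_add, Matrix.mul_sub, Matrix.smul_mul, Matrix.mul_smul]
  module

variable {ι : Type*} [Fintype ι] [DecidableEq ι]

lemma PosSemidef.det_le_trace_pow {M : Matrix ι ι ℝ} (hM : M.PosSemidef) :
    M.det ≤ M.trace ^ Fintype.card ι := by
  rw [hM.1.det_eq_prod_eigenvalues, hM.1.trace_eq_sum_eigenvalues]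
  simp only [RCLike.ofReal_real_eq_id, id_eq]
  calc ∏ i, hM.1.eigenvalues i ≤ ∏ _i : ι, ∑ j, hM.1.eigenvalues j :=
        Finset.prod_le_prod (fun i _ => hM.eigenvalues_nonneg i) fun i _ =>
          Finset.single_le_sum (fun j _ => hM.eigenvalues_nonneg j) (Finset.mem_univ i)
    _ = (∑ j, hM.1.eigenvalues j) ^ Fintype.card ι := by simp

lemma IsHermitian.det_smul_one_add_smul {M : Matrix ι ι ℝ} (hM : M.IsHermitian) (a b : ℝ) :
    (a • 1 + b • M).det = ∏ i, (a + b * hM.eigenvalues i) := by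
  set U := hM.eigenvectorUnitary
  have hφ : Unitary.conjStarAlgAut ℝ _ (star U) (a • 1 + b • M) =
      diagonal fun i => a + b * hM.eigenvalues i := by
    rw [map_add, map_smul, map_smul, map_one, hM.conjStarAlgAut_star_eigenvectorUnitary]
    ext i j; by_cases hij : i = j <;> simp [hij]
  rw [← det_diagonal, ← hφ, Unitary.conjStarAlgAut_star_apply, det_mul, det_mul,
    mul_right_comm, ← det_mul, Unitary.coe_star_mul_self, det_one, one_mul]

lemma PosDef.mul_log_det_le_log_det_smul_one_add_smul {M : Matrix ι ι ℝ} (hM : M.PosDef)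
    {a b : ℝ} (ha : 0 ≤ a) (hb : 0 ≤ b) (hab : a + b = 1) :
    b * Real.log M.det ≤ Real.log (a • 1 + b • M).det := by
  have hpos : ∀ i, 0 < a + b * hM.1.eigenvalues i := fun i => by
    simpa using convex_Ioi (0 : ℝ) one_pos (hM.eigenvalues_pos i) ha hb hab
  rw [hM.1.det_smul_one_add_smul, Real.log_prod fun i _ => (hpos i).ne',
    hM.1.det_eq_prod_eigenvalues]
  simp only [RCLike.ofReal_real_eq_id, id_eq]
  rw [Real.log_prod fun i _ => (hM.eigenvalues_pos i).ne', Finset.mul_sum]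
  refine Finset.sum_le_sum fun i _ => ?_
  simpa using strictConcaveOn_log_Ioi.concaveOn.2 (Set.mem_Ioi.2 one_pos)
    (Set.mem_Ioi.2 (hM.eigenvalues_pos i)) ha hb hab

lemma PosDef.exists_isUnit_star_mul_self {A : Matrix ι ι ℝ} (hA : A.PosDef) :
    ∃ X : Matrix ι ι ℝ, IsUnit X ∧ A = star X * X := by
  have hS := CFC.sqrt_mul_sqrt_self A hA.posSemidef.nonneg
  refine ⟨CFC.sqrt A, isUnit_of_mul_isUnit_left (hS ▸ hA.isUnit), ?_⟩
  rw [(IsSelfAdjoint.of_nonneg (CFC.sqrt_nonneg A)).star_eq, hS]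

/-- Congruence by `X`, where `A = Xᴴ X`, reduces the inequality to `A = 1`, and there
`det (a • 1 + b • M) = ∏ (a + b λᵢ)` over the eigenvalues of `M`. -/
theorem concaveOn_log_det :
    ConcaveOn ℝ {A : Matrix ι ι ℝ | A.PosDef} fun A => Real.log A.det := by
  refine ⟨convex_posDef, ?_⟩
  rintro A hA C hC a b ha hb hab
  obtain ⟨X, hX, rfl⟩ := PosDef.exists_isUnit_star_mul_self hA
  obtain ⟨M, hM, rfl⟩ : ∃ M : Matrix ι ι ℝ, M.PosDef ∧ C = star X * M * X := by
    refine ⟨star X⁻¹ * C * X⁻¹,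
      (IsUnit.posDef_star_left_conjugate_iff (isUnit_nonsing_inv_iff.2 hX)).2 hC, ?_⟩
    have hdet := (isUnit_iff_isUnit_det X).mp hX
    rw [← Matrix.mul_assoc, ← Matrix.mul_assoc, ← star_mul, nonsing_inv_mul _ hdet, star_one,
      Matrix.one_mul, Matrix.mul_assoc, nonsing_inv_mul _ hdet, Matrix.mul_one]
  have hlog : ∀ N : Matrix ι ι ℝ, N.PosDef →
      Real.log (star X * N * X).det = Real.log (star X * X).det + Real.log N.det :=
    fun N hN => by
      rw [← Real.log_mul hA.det_pos.ne' hN.det_pos.ne', det_mul, det_mul, det_mul]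
      congr 1
      ring
  have hcomb : a • (star X * X) + b • (star X * M * X) = star X * (a • 1 + b • M) * X := by
    simp only [Matrix.mul_add, Matrix.add_mul, Matrix.mul_smul, Matrix.smul_mul, Matrix.mul_one]
  have hsplit : a * Real.log (star X * X).det + b * Real.log (star X * X).det =
      Real.log (star X * X).det := by
    rw [← add_mul, hab, one_mul]
  simp only [smul_eq_mul]
  rw [hcomb, hlog _ (convex_posDef PosDef.one hM ha hb hab), hlog _ hM]
  linarith [hM.mul_log_det_le_log_det_smul_one_add_smul ha hb hab]

lemma trace_add_one_add_mul_mul_transpose_le {K V B : Matrix ι ι ℝ} (hK : K.PosSemidef)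
    (hV : V.PosSemidef) :
    (V + (1 + B) * K * (1 + B)ᵀ).trace ≤ 2 * (V + B * K * Bᵀ).trace + 2 * K.trace := by
  have parallelogram : (1 + B) * K * (1 + B)ᵀ + (1 - B) * K * (1 - B)ᵀ =
      (2 : ℝ) • K + (2 : ℝ) • (B * K * Bᵀ) := by
    simp only [transpose_add, transpose_sub, transpose_one, Matrix.add_mul, Matrix.sub_mul,
      Matrix.mul_add, Matrix.mul_sub, Matrix.one_mul, Matrix.mul_one]
    module
  have hdiff : 0 ≤ ((1 - B) * K * (1 - B)ᵀ).trace := by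
    simpa only [conjTranspose_eq_transpose_of_trivial] using
      (hK.mul_mul_conjTranspose_same (1 - B)).trace_nonneg
  have := congrArg trace parallelogram
  simp only [trace_add, trace_smul, smul_eq_mul] at this ⊢
  linarith [hV.trace_nonneg]

end Matrix

section FeedbackCapacity

variable {n : ℕ} {K_Z : Matrix (Fin n) (Fin n) ℝ}

def achievableRates (K_Z : Matrix (Fin n) (Fin n) ℝ) (P : ℝ) : Set ℝ :=
  {c : ℝ | ∃ K_V B : Matrix (Fin n) (Fin n) ℝ,
    K_V.PosSemidef ∧ (∀ i j : Fin n, i ≤ j → B i j = 0) ∧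
    (K_V + B * K_Z * Bᵀ).trace ≤ (n : ℝ) * P ∧
    c = (1 / (2 * (n : ℝ))) *
          Real.log ((K_V + (1 + B) * K_Z * (1 + B)ᵀ).det / K_Z.det)}

lemma CFBn_eq_sSup_achievableRates (K_Z : Matrix (Fin n) (Fin n) ℝ) (P : ℝ) :
    CFBn K_Z P = sSup (achievableRates K_Z P) := rfl

lemma posDef_add_one_add_mul_mul_transpose (hKZ : K_Z.PosDef) {K_V B : Matrix (Fin n) (Fin n) ℝ}
    (hV : K_V.PosSemidef) (hB : ∀ i j, i ≤ j → B i j = 0) :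
    (K_V + (1 + B) * K_Z * (1 + B)ᵀ).PosDef := by
  have hunit : IsUnit (1 + B) := by
    rw [isUnit_iff_isUnit_det, det_one_add_eq_one hB]; exact isUnit_one
  simpa using PosDef.posSemidef_add hV
    (hKZ.mul_mul_conjTranspose_same (vecMul_injective_iff_isUnit.2 hunit))

lemma zero_mem_achievableRates {P : ℝ} (hP : 0 ≤ P) : (0 : ℝ) ∈ achievableRates K_Z P := by
  refine ⟨0, 0, PosSemidef.zero, fun _ _ _ => rfl, by simpa using mul_nonneg n.cast_nonneg hP, ?_⟩
  simp

lemma bddAbove_achievableRates (hKZ : K_Z.PosDef) (P : ℝ) :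
    BddAbove (achievableRates K_Z P) := by
  refine ⟨1 / (2 * n) * Real.log ((2 * (n * P) + 2 * K_Z.trace) ^ n / K_Z.det), ?_⟩
  rintro _ ⟨K_V, B, hV, hB, htr, rfl⟩
  have hM := posDef_add_one_add_mul_mul_transpose hKZ hV hB
  have hdet := hM.posSemidef.det_le_trace_pow
  have htr' := trace_add_one_add_mul_mul_transpose_le (B := B) hKZ.posSemidef hV
  rw [Fintype.card_fin] at hdet
  gcongr
  · exact div_pos hM.det_pos hKZ.det_pos
  · exact hKZ.det_pos.le
  · exact hdet.trans (pow_le_pow_left₀ hM.posSemidef.trace_nonneg (by linarith) n)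

lemma exists_mem_achievableRates_ge_mix (hKZ : K_Z.PosDef) {P₁ P₂ a b s t : ℝ}
    (hs : 0 ≤ s) (ht : 0 ≤ t) (hst : s + t = 1)
    (ha : a ∈ achievableRates K_Z P₁) (hb : b ∈ achievableRates K_Z P₂) :
    ∃ c ∈ achievableRates K_Z (s * P₁ + t * P₂), s * a + t * b ≤ c := by
  obtain rfl : t = 1 - s := eq_sub_of_add_eq' hst
  obtain ⟨V₁, B₁, hV₁, hB₁, htr₁, rfl⟩ := ha
  obtain ⟨V₂, B₂, hV₂, hB₂, htr₂, rfl⟩ := hb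
  set B := s • B₁ + (1 - s) • B₂
  set V := s • V₁ + (1 - s) • V₂ + (s * (1 - s)) • ((B₁ - B₂) * K_Z * (B₁ - B₂)ᵀ)
  have hV : V.PosSemidef := by
    refine ((hV₁.smul hs).add (hV₂.smul ht)).add (PosSemidef.smul ?_ (mul_nonneg hs ht))
    simpa only [conjTranspose_eq_transpose_of_trivial] using
      hKZ.posSemidef.mul_mul_conjTranspose_same (B₁ - B₂)
  have hB : ∀ i j, i ≤ j → B i j = 0 := fun i j hij => by simp [B, hB₁ i j hij, hB₂ i j hij]
  have hpower : V + B * K_Z * Bᵀ =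
      s • (V₁ + B₁ * K_Z * B₁ᵀ) + (1 - s) • (V₂ + B₂ * K_Z * B₂ᵀ) := by
    simpa only [zero_add] using mix_add_mul_mul_transpose K_Z V₁ V₂ B₁ B₂ 0 s
  have hout : V + (1 + B) * K_Z * (1 + B)ᵀ = s • (V₁ + (1 + B₁) * K_Z * (1 + B₁)ᵀ) +
      (1 - s) • (V₂ + (1 + B₂) * K_Z * (1 + B₂)ᵀ) :=
    mix_add_mul_mul_transpose K_Z V₁ V₂ B₁ B₂ 1 s
  have hM₁ := posDef_add_one_add_mul_mul_transpose hKZ hV₁ hB₁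
  have hM₂ := posDef_add_one_add_mul_mul_transpose hKZ hV₂ hB₂
  refine ⟨_, ⟨V, B, hV, hB, ?_, rfl⟩, ?_⟩
  · rw [hpower, trace_add, trace_smul, trace_smul, smul_eq_mul, smul_eq_mul]
    calc s * (V₁ + B₁ * K_Z * B₁ᵀ).trace + (1 - s) * (V₂ + B₂ * K_Z * B₂ᵀ).trace
        ≤ s * (n * P₁) + (1 - s) * (n * P₂) := by gcongr
      _ = n * (s * P₁ + (1 - s) * P₂) := by ring
  · have hconc := concaveOn_log_det.2 hM₁ hM₂ hs ht hst
    simp only [smul_eq_mul] at hconc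
    rw [hout, Real.log_div hM₁.det_pos.ne' hKZ.det_pos.ne',
      Real.log_div hM₂.det_pos.ne' hKZ.det_pos.ne',
      Real.log_div (convex_posDef hM₁ hM₂ hs ht hst).det_pos.ne' hKZ.det_pos.ne']
    have hc : (0 : ℝ) ≤ 1 / (2 * n) := by positivity
    linarith [mul_le_mul_of_nonneg_left hconc hc]

end FeedbackCapacity

/-- **Yanagi–Chen–Yu.** For any symmetric positive definite noise
covariance `K_Z`, the `n`-block feedback capacity is concave in the power `P`. -/
theorem stmt13 (n : ℕ) (K_Z : Matrix (Fin n) (Fin n) ℝ) (hKZ : K_Z.PosDef)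
    (P₁ P₂ t : ℝ) (hP₁ : 0 < P₁) (hP₂ : 0 < P₂) (ht : t ∈ Set.Icc (0 : ℝ) 1) :
    t * CFBn K_Z P₁ + (1 - t) * CFBn K_Z P₂ ≤
      CFBn K_Z (t * P₁ + (1 - t) * P₂) := by
  obtain ⟨ht0, ht1⟩ := ht
  simp only [CFBn_eq_sSup_achievableRates]
  exact Real.mul_sSup_add_mul_sSup_le ht0 (sub_nonneg.2 ht1)
    ⟨0, zero_mem_achievableRates hP₁.le⟩ (bddAbove_achievableRates hKZ P₁)
    ⟨0, zero_mem_achievableRates hP₂.le⟩ (bddAbove_achievableRates hKZ P₂)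
    (bddAbove_achievableRates hKZ _) fun a ha b hb =>
      exists_mem_achievableRates_ge_mix hKZ ht0 (sub_nonneg.2 ht1) (add_sub_cancel _ _) ha hb
end
end

section
/- Let F ∈ ℝ^{k×k} be invertible and H ∈ ℝ^{1×k}. Suppose the symmetric matrix Σ ∈ ℝ^{k×k} satisfies 1 + HΣHᵀ ≠ 0 and solves the discrete algebraic Riccati equation Σ = FΣFᵀ - (FΣHᵀ)(FΣHᵀ)ᵀ/(1+HΣHᵀ). Let Γ = FΣHᵀ/(1+HΣHᵀ) ∈ ℝ^{k×1}. Then F - ΓH is invertible and 1 + HΣHᵀ = det(F)/det(F - ΓH). -/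
open Matrix

theorem Matrix.det_sub_vecMulVec_mulVec {n R : Type*} [Fintype n] [DecidableEq n] [CommRing R]
    (A : Matrix n n R) (u v : n → R) :
    (A - vecMulVec (A *ᵥ u) v).det = A.det * (1 - v ⬝ᵥ u) := by
  have hfactor :
      A - vecMulVec (A *ᵥ u) v = A * (1 + replicateCol Unit (-u) * replicateRow Unit v) := by
    rw [← vecMulVec_eq, mul_add, mul_one, ← mul_vecMulVec, neg_vecMulVec, mul_neg, sub_eq_add_neg]
  rw [hfactor, det_mul, det_one_add_replicateCol_mul_replicateRow, dotProduct_neg, sub_eq_add_neg]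

theorem stmt18_general (k : ℕ) (F : Matrix (Fin k) (Fin k) ℝ) (H : Fin k → ℝ)
    (S : Matrix (Fin k) (Fin k) ℝ)
    (hF : F.det ≠ 0)
    (hβ : 1 + H ⬝ᵥ S.mulVec H ≠ 0)
    (Γ : Fin k → ℝ)
    (hΓ : Γ = (1 + H ⬝ᵥ S.mulVec H)⁻¹ • F.mulVec (S.mulVec H)) :
    (F - Matrix.vecMulVec Γ H).det ≠ 0 ∧
      1 + H ⬝ᵥ S.mulVec H = F.det / (F - Matrix.vecMulVec Γ H).det := by
  set β := 1 + H ⬝ᵥ S.mulVec H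
  have hdet : (F - vecMulVec Γ H).det = F.det * β⁻¹ := by
    rw [hΓ, ← mulVec_smul, det_sub_vecMulVec_mulVec, dotProduct_smul, smul_eq_mul]
    field_simp
    ring
  rw [hdet]
  exact ⟨mul_ne_zero hF (inv_ne_zero hβ), by field_simp⟩

/-- For an invertible `F` and a symmetric solution `Σ` of the
discrete algebraic Riccati equation
`Σ = FΣFᵀ - (FΣHᵀ)(FΣHᵀ)ᵀ/(1+HΣHᵀ)` with `1 + HΣHᵀ ≠ 0`, the matrix `F - ΓH`
with `Γ = FΣHᵀ/(1+HΣHᵀ)` is invertible and `1 + HΣHᵀ = det F / det(F - ΓH)`. -/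
theorem stmt18 (k : ℕ) (F : Matrix (Fin k) (Fin k) ℝ) (H : Fin k → ℝ)
    (S : Matrix (Fin k) (Fin k) ℝ)
    (hF : F.det ≠ 0) (hS : S.IsSymm)
    (hβ : 1 + H ⬝ᵥ S.mulVec H ≠ 0)
    (hric : S = F * S * Fᵀ - (1 + H ⬝ᵥ S.mulVec H)⁻¹ •
      Matrix.vecMulVec (F.mulVec (S.mulVec H)) (F.mulVec (S.mulVec H)))
    (Γ : Fin k → ℝ)
    (hΓ : Γ = (1 + H ⬝ᵥ S.mulVec H)⁻¹ • F.mulVec (S.mulVec H)) :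
    (F - Matrix.vecMulVec Γ H).det ≠ 0 ∧
      1 + H ⬝ᵥ S.mulVec H = F.det / (F - Matrix.vecMulVec Γ H).det :=
  stmt18_general k F H S hF hβ Γ hΓ
end
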